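/- arXiv:1202.1815 — 2 statements merged into one kernel-verified Lean document; each statement's English description precedes it below -/
import Mathlib

section
/- If λ ⊆ V₁ ⊕ V₂ is a Lagrangian subspace of the direct sum of symplectic vector spaces (V₁, ω₁) and (V₂, ω₂) such that λ ∩ V₁ is Lagrangian in V₁, then λ decomposes as λ = (λ ∩ V₁) ⊕ (λ ∩ V₂); that is, λ is spanned by its intersections with the two factors. -/
/-!
An isotropic `L` pairs `(u, 0) ∈ L` with any `(x, y) ∈ L` to give `ω₁ u x = 0`, so `x` lies in the
`ω₁`-orthogonal of `L ∩ V₁`. That orthogonal is `L ∩ V₁` itself, hence `(x, 0) ∈ L`, and then also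
`(0, y) = (x, y) - (x, 0) ∈ L`.
-/

open LinearMap (BilinForm)

/-- The direct sum of two bilinear forms, on the product space. -/
def directSumForm {K V₁ V₂ : Type} [Field K] [AddCommGroup V₁] [Module K V₁]
    [AddCommGroup V₂] [Module K V₂] (ω₁ : BilinForm K V₁) (ω₂ : BilinForm K V₂) :
    BilinForm K (V₁ × V₂) :=
  ω₁.comp (LinearMap.fst K V₁ V₂) (LinearMap.fst K V₁ V₂) +
    ω₂.comp (LinearMap.snd K V₁ V₂) (LinearMap.snd K V₁ V₂)

/-- A Lagrangian subspace: one equal to its own orthogonal complement. -/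
def IsLagrangian {K V : Type} [Field K] [AddCommGroup V] [Module K V]
    (B : BilinForm K V) (L : Submodule K V) : Prop :=
  L = B.orthogonal L

namespace Submodule

variable {R M N : Type*}

theorem mem_map_fst_inf_fst_iff [Semiring R] [AddCommMonoid M] [Module R M]
    [AddCommMonoid N] [Module R N] {L : Submodule R (M × N)} {x : M} :
    x ∈ (L ⊓ Submodule.fst R M N).map (LinearMap.fst R M N) ↔ (x, 0) ∈ L := by
  constructor
  · rintro ⟨⟨x', y⟩, ⟨hL, rfl : y = 0⟩, rfl⟩
    exact hL
  · exact fun hx => ⟨(x, 0), ⟨hx, rfl⟩, rfl⟩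

theorem eq_inf_fst_sup_inf_snd [Ring R] [AddCommGroup M] [Module R M]
    [AddCommGroup N] [Module R N] {L : Submodule R (M × N)}
    (hL : ∀ p ∈ L, (p.1, (0 : N)) ∈ L) :
    L = (L ⊓ Submodule.fst R M N) ⊔ (L ⊓ Submodule.snd R M N) := by
  refine le_antisymm (fun p hp => ?_) (sup_le inf_le_left inf_le_left)
  have hfst : (p.1, (0 : N)) ∈ L ⊓ Submodule.fst R M N := ⟨hL p hp, rfl⟩
  have hsnd : ((0 : M), p.2) ∈ L ⊓ Submodule.snd R M N := by
    have h_sub : p - (p.1, 0) = (0, p.2) := by ext <;> simp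
    exact ⟨h_sub ▸ L.sub_mem hp (hL p hp), rfl⟩
  have hp_eq : p = (p.1, 0) + (0, p.2) := by simp
  rw [hp_eq]
  exact add_mem (mem_sup_left hfst) (mem_sup_right hsnd)

end Submodule

section DirectSumForm

variable {K V₁ V₂ : Type} [Field K] [AddCommGroup V₁] [Module K V₁]
  [AddCommGroup V₂] [Module K V₂] {ω₁ : BilinForm K V₁} {ω₂ : BilinForm K V₂}

@[simp]
theorem directSumForm_apply (p q : V₁ × V₂) :
    directSumForm ω₁ ω₂ p q = ω₁ p.1 q.1 + ω₂ p.2 q.2 :=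
  rfl

theorem fst_mem_orthogonal_map_fst_inf_fst {L : Submodule K (V₁ × V₂)}
    (hL : L ≤ (directSumForm ω₁ ω₂).orthogonal L) {p : V₁ × V₂} (hp : p ∈ L) :
    p.1 ∈ ω₁.orthogonal ((L ⊓ Submodule.fst K V₁ V₂).map (LinearMap.fst K V₁ V₂)) := by
  rw [LinearMap.BilinForm.mem_orthogonal_iff]
  intro u hu
  rw [Submodule.mem_map_fst_inf_fst_iff] at hu
  simpa using (LinearMap.BilinForm.mem_orthogonal_iff.mp (hL hp)) _ hu

end DirectSumForm

theorem lagrangian_decomposes_general {K V₁ V₂ : Type} [Field K]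
    [AddCommGroup V₁] [Module K V₁] [AddCommGroup V₂] [Module K V₂]
    (ω₁ : BilinForm K V₁) (ω₂ : BilinForm K V₂)
    (L : Submodule K (V₁ × V₂))
    (hL : IsLagrangian (directSumForm ω₁ ω₂) L)
    (hL1 : IsLagrangian ω₁ ((L ⊓ Submodule.fst K V₁ V₂).map (LinearMap.fst K V₁ V₂))) :
    L = (L ⊓ Submodule.fst K V₁ V₂) ⊔ (L ⊓ Submodule.snd K V₁ V₂) := by
  refine Submodule.eq_inf_fst_sup_inf_snd fun p hp => ?_
  rw [← Submodule.mem_map_fst_inf_fst_iff, hL1]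
  exact fst_mem_orthogonal_map_fst_inf_fst hL.le hp

theorem lagrangian_decomposes {K V₁ V₂ : Type} [Field K]
    [AddCommGroup V₁] [Module K V₁] [AddCommGroup V₂] [Module K V₂]
    [FiniteDimensional K V₁] [FiniteDimensional K V₂]
    (ω₁ : BilinForm K V₁) (ω₂ : BilinForm K V₂)
    (h₁alt : ω₁.IsAlt) (h₁nd : ω₁.Nondegenerate)
    (h₂alt : ω₂.IsAlt) (h₂nd : ω₂.Nondegenerate)
    (L : Submodule K (V₁ × V₂))
    (hL : IsLagrangian (directSumForm ω₁ ω₂) L)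
    (hL1 : IsLagrangian ω₁ ((L ⊓ Submodule.fst K V₁ V₂).map (LinearMap.fst K V₁ V₂))) :
    L = (L ⊓ Submodule.fst K V₁ V₂) ⊔ (L ⊓ Submodule.snd K V₁ V₂) :=
  lagrangian_decomposes_general ω₁ ω₂ L hL hL1
end

section
/- If two endomorphisms X and Y of finitely generated free modules over a commutative ring are strong shift equivalent, then Trace(Xⁿ) = Trace(Yⁿ) for every positive integer n. -/
/-- Elementary strong shift equivalence of square matrices over a commutative ring. -/
def ElemSSE {R : Type} [CommRing R] {n m : ℕ}
    (X : Matrix (Fin n) (Fin n) R) (Y : Matrix (Fin m) (Fin m) R) : Prop :=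
  ∃ (S : Matrix (Fin n) (Fin m) R) (T : Matrix (Fin m) (Fin n) R), X = S * T ∧ Y = T * S

/-- Strong shift equivalence: a finite chain of elementary strong shift equivalences. -/
def SSE {R : Type} [CommRing R] :
    (Σ n : ℕ, Matrix (Fin n) (Fin n) R) → (Σ n : ℕ, Matrix (Fin n) (Fin n) R) → Prop :=
  Relation.ReflTransGen (fun A B => ElemSSE A.2 B.2)

namespace Matrix

variable {ι κ R : Type*} [Fintype ι] [Fintype κ] [DecidableEq ι] [DecidableEq κ]

theorem mul_pow_succ_eq [Semiring R] (S : Matrix ι κ R) (T : Matrix κ ι R) (k : ℕ) :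
    (S * T) ^ (k + 1) = S * (T * S) ^ k * T := by
  induction k with
  | zero => simp
  | succ k ih => rw [pow_succ, ih, pow_succ]; simp only [Matrix.mul_assoc]

theorem trace_mul_pow_comm [CommSemiring R] (S : Matrix ι κ R) (T : Matrix κ ι R) {k : ℕ}
    (hk : k ≠ 0) : ((S * T) ^ k).trace = ((T * S) ^ k).trace := by
  obtain ⟨j, rfl⟩ := Nat.exists_eq_succ_of_ne_zero hk
  rw [mul_pow_succ_eq, Matrix.mul_assoc, trace_mul_comm, Matrix.mul_assoc, ← pow_succ]

end Matrix

variable {R : Type} [CommRing R]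

theorem ElemSSE.trace_pow_eq {n m : ℕ} {X : Matrix (Fin n) (Fin n) R}
    {Y : Matrix (Fin m) (Fin m) R} (h : ElemSSE X Y) {k : ℕ} (hk : k ≠ 0) :
    (X ^ k).trace = (Y ^ k).trace := by
  obtain ⟨S, T, rfl, rfl⟩ := h
  exact Matrix.trace_mul_pow_comm S T hk

theorem SSE.trace_pow_eq {A B : Σ n : ℕ, Matrix (Fin n) (Fin n) R} (h : SSE A B) {k : ℕ}
    (hk : k ≠ 0) : (A.2 ^ k).trace = (B.2 ^ k).trace := by
  induction h with
  | refl => rfl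
  | tail _ hBC ih => exact ih.trans (hBC.trace_pow_eq hk)

theorem SSE_trace_pow_eq {R : Type} [CommRing R] {n m : ℕ}
    (X : Matrix (Fin n) (Fin n) R) (Y : Matrix (Fin m) (Fin m) R)
    (h : SSE ⟨n, X⟩ ⟨m, Y⟩) : ∀ k : ℕ, 0 < k → (X ^ k).trace = (Y ^ k).trace :=
  fun _ hk => h.trace_pow_eq hk.ne'
end
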